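/- The limit lim_{q→∞} C(3,q)/(q^3/3) exists and equals 4/9, where the limit is taken over integers q tending to infinity. -/

import Mathlib

/-- Two words `u` and `v` of length `n` over alphabet `F` are overlapping if some
non-empty proper prefix of one equals a non-empty proper suffix of the other. -/
def Overlapping {F : Type*} {n : ℕ} (u v : Fin n → F) : Prop :=
  ∃ m : ℕ, ∃ _h1 : 0 < m, ∃ h2 : m < n,
    ((∀ i : ℕ, ∀ hi : i < m, u ⟨i, hi.trans h2⟩ = v ⟨n - m + i, by omega⟩) ∨
     (∀ i : ℕ, ∀ hi : i < m, v ⟨i, hi.trans h2⟩ = u ⟨n - m + i, by omega⟩))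

/-- A code `C ⊆ F^n` is non-overlapping if every two (not necessarily distinct)
codewords are non-overlapping. -/
def NonOverlappingCode {F : Type*} {n : ℕ} (C : Set (Fin n → F)) : Prop :=
  ∀ u ∈ C, ∀ v ∈ C, ¬ Overlapping u v

/-- `maxNOCode n q` is `C(n,q)`, the maximum cardinality of a non-overlapping
`q`-ary code of length `n`. -/
noncomputable def maxNOCode (n q : ℕ) : ℕ :=
  sSup {m | ∃ C : Set (Fin n → Fin q), NonOverlappingCode C ∧ C.ncard = m}

/-!
For a length-3 non-overlapping code, the set `A` of first letters and the set `B` of last letters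
are disjoint, and no two-letter prefix of a codeword is a two-letter suffix of a codeword. Sort
codewords by their middle letter: those with middle letter in `B` have prefix in `A × B`, those
with middle letter in `A` have suffix in `A × B`, and the remaining `q - |A| - |B|` middle letters
carry at most `|A| |B|` words each. With `x + y ≤ |A| |B|` prefix and suffix pairs this gives at
most `|B| x + |A| y + (q - |A| - |B|) |A| |B| ≤ 4q³/27` codewords, by AM-GM. Conversely, for
`|S| = ⌊q/3⌋` the code `S × Sᶜ × Sᶜ` is non-overlapping and has about `4q³/27` words.
-/

open Finset Filter Topology

lemma overlapping_fin_three_iff {F : Type*} (u v : Fin 3 → F) :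
    Overlapping u v ↔
      u 0 = v 2 ∨ v 0 = u 2 ∨ (u 0 = v 1 ∧ u 1 = v 2) ∨ (v 0 = u 1 ∧ v 1 = u 2) := by
  constructor
  · rintro ⟨m, hm, hmn, H | H⟩ <;> interval_cases m
    · exact .inl (H 0 one_pos)
    · exact .inr <| .inr <| .inl ⟨H 0 two_pos, H 1 one_lt_two⟩
    · exact .inr <| .inl (H 0 one_pos)
    · exact .inr <| .inr <| .inr ⟨H 0 two_pos, H 1 one_lt_two⟩
  · rintro (h | h | ⟨h₀, h₁⟩ | ⟨h₀, h₁⟩)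
    · exact ⟨1, one_pos, by omega, .inl fun i hi => by interval_cases i; exact h⟩
    · exact ⟨1, one_pos, by omega, .inr fun i hi => by interval_cases i; exact h⟩
    · exact ⟨2, two_pos, by omega, .inl fun i hi => by interval_cases i; exacts [h₀, h₁]⟩
    · exact ⟨2, two_pos, by omega, .inr fun i hi => by interval_cases i; exacts [h₀, h₁]⟩

lemma bddAbove_ncard_nonOverlappingCode (n q : ℕ) :
    BddAbove {m | ∃ C : Set (Fin n → Fin q), NonOverlappingCode C ∧ C.ncard = m} := by
  refine ⟨Nat.card (Fin n → Fin q), ?_⟩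
  rintro m ⟨C, -, rfl⟩
  exact Set.ncard_le_card C

lemma exists_nonOverlappingCode_ncard_eq_maxNOCode (n q : ℕ) :
    ∃ C : Set (Fin n → Fin q), NonOverlappingCode C ∧ C.ncard = maxNOCode n q :=
  Nat.sSup_mem ⟨0, by exact ⟨∅, fun _ hu => hu.elim, Set.ncard_empty _⟩⟩
    (bddAbove_ncard_nonOverlappingCode n q)

lemma NonOverlappingCode.ncard_le_maxNOCode {n q : ℕ} {C : Set (Fin n → Fin q)}
    (hC : NonOverlappingCode C) : C.ncard ≤ maxNOCode n q :=
  le_csSup (bddAbove_ncard_nonOverlappingCode n q) ⟨C, hC, rfl⟩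

lemma card_le_card_image_mul_card_image {α β γ : Type*} [DecidableEq β] [DecidableEq γ]
    (s : Finset α) (f : α → β) (g : α → γ) (hfg : Function.Injective fun a => (f a, g a)) :
    #s ≤ #(s.image f) * #(s.image g) := by
  rw [← card_product]
  exact card_le_card_of_injOn _
    (fun a ha => mem_product.2 ⟨mem_image_of_mem f ha, mem_image_of_mem g ha⟩) hfg.injOn

lemma twentyseven_mul_mul_sq_le (a s : ℕ) : 27 * (a * s ^ 2) ≤ 4 * (a + s) ^ 3 := by
  zify
  -- `4 (a + s)³ - 27 a s² = (s - 2a)² (a + 4s)`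
  nlinarith [mul_nonneg (sq_nonneg ((s : ℤ) - 2 * a)) (by positivity : (0 : ℤ) ≤ a + 4 * s)]

lemma twentyseven_mul_add_mul_le_of_add_le_mul (a b r x y : ℕ) (hxy : x + y ≤ a * b) :
    27 * (x * b + a * y + r * (a * b)) ≤ 4 * (a + b + r) ^ 3 := by
  wlog hab : a ≤ b generalizing a b x y
  · calc _ = 27 * (y * a + b * x + r * (b * a)) := by ring
      _ ≤ 4 * (b + a + r) ^ 3 := this b a y x (by linarith [mul_comm a b]) (by omega)
      _ = _ := by ring
  have hmix : x * b + a * y ≤ b * (a * b) :=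
    calc x * b + a * y ≤ b * (x + y) := by nlinarith
      _ ≤ b * (a * b) := Nat.mul_le_mul_left b hxy
  calc 27 * (x * b + a * y + r * (a * b)) ≤ 27 * (a * (b * (b + r))) := by nlinarith
    _ ≤ 27 * (a * (b + r) ^ 2) := by gcongr; nlinarith
    _ ≤ 4 * (a + (b + r)) ^ 3 := twentyseven_mul_mul_sq_le a (b + r)
    _ = 4 * (a + b + r) ^ 3 := by ring

namespace NonOverlappingCode

variable {F : Type*} [DecidableEq F] {D : Finset (Fin 3 → F)}

lemma disjoint_image_zero_image_two (hD : NonOverlappingCode (D : Set (Fin 3 → F))) :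
    Disjoint (D.image (· 0)) (D.image (· 2)) := by
  simp only [disjoint_left, mem_image, not_exists, not_and]
  rintro _ ⟨u, hu, rfl⟩ v hv huv
  exact hD u hu v hv ((overlapping_fin_three_iff u v).2 (.inl huv.symm))

lemma disjoint_image_prefix_image_suffix (hD : NonOverlappingCode (D : Set (Fin 3 → F))) :
    Disjoint (D.image fun w => (w 0, w 1)) (D.image fun w => (w 1, w 2)) := by
  simp only [disjoint_left, mem_image, not_exists, not_and]
  rintro _ ⟨u, hu, rfl⟩ v hv huv
  obtain ⟨h₀, h₁⟩ := Prod.ext_iff.1 huv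
  exact hD u hu v hv ((overlapping_fin_three_iff u v).2 (.inr <| .inr <| .inl ⟨h₀.symm, h₁.symm⟩))

theorem twentyseven_mul_card_le [Fintype F] (hD : NonOverlappingCode (D : Set (Fin 3 → F))) :
    27 * #D ≤ 4 * Fintype.card F ^ 3 := by
  set A := D.image (· 0)
  set B := D.image (· 2)
  set DA := D.filter (· 1 ∈ A)
  set DB := D.filter (· 1 ∈ B)
  set DR := D.filter (· 1 ∉ A ∪ B)
  set P := DB.image fun w => (w 0, w 1)
  set S := DA.image fun w => (w 1, w 2)
  have hword : ∀ {u v : Fin 3 → F}, u 0 = v 0 → u 1 = v 1 → u 2 = v 2 → u = v :=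
    fun h₀ h₁ h₂ => funext fun i => by fin_cases i <;> assumption
  have hPS : #P + #S ≤ #A * #B := by
    have hdisj : Disjoint P S := (disjoint_image_prefix_image_suffix hD).mono
      (image_subset_image (filter_subset _ _)) (image_subset_image (filter_subset _ _))
    rw [← card_union_of_disjoint hdisj, ← card_product]
    refine card_le_card (union_subset ?_ ?_) <;> intro p hp <;>
      obtain ⟨w, hw, rfl⟩ := mem_image.1 hp <;> obtain ⟨hwD, hw₁⟩ := mem_filter.1 hw
    exacts [mem_product.2 ⟨mem_image_of_mem _ hwD, hw₁⟩,
      mem_product.2 ⟨hw₁, mem_image_of_mem _ hwD⟩]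
  have hDB : #DB ≤ #P * #B := by
    refine (card_le_card_image_mul_card_image DB (fun w => (w 0, w 1)) (· 2)
      fun u v h => ?_).trans ?_
    · simp only [Prod.mk.injEq] at h
      exact hword h.1.1 h.1.2 h.2
    · exact Nat.mul_le_mul_left _ (card_le_card (image_subset_image (filter_subset _ _)))
  have hDA : #DA ≤ #A * #S := by
    refine (card_le_card_image_mul_card_image DA (· 0) (fun w => (w 1, w 2))
      fun u v h => ?_).trans ?_
    · simp only [Prod.mk.injEq] at h
      exact hword h.1 h.2.1 h.2.2
    · exact Nat.mul_le_mul_right _ (card_le_card (image_subset_image (filter_subset _ _)))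
  have hDR : #DR ≤ #(A ∪ B)ᶜ * (#A * #B) := by
    refine (card_le_card_image_mul_card_image DR (· 1) (fun w => (w 0, w 2))
      fun u v h => ?_).trans ?_
    · simp only [Prod.mk.injEq] at h
      exact hword h.2.1 h.1 h.2.2
    · refine Nat.mul_le_mul (card_le_card ?_) ((card_le_card ?_).trans (card_product A B).le) <;>
        intro p hp <;>
        obtain ⟨w, hw, rfl⟩ := mem_image.1 hp <;> obtain ⟨hwD, hw₁⟩ := mem_filter.1 hw
      exacts [mem_compl.2 hw₁, mem_product.2 ⟨mem_image_of_mem _ hwD, mem_image_of_mem _ hwD⟩]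
  have hsplit : #D ≤ #DB + #DA + #DR := by
    calc #D ≤ #(DB ∪ DA ∪ DR) := card_le_card fun w hw => by
          simp only [DA, DB, DR, mem_union, mem_filter, hw, true_and]; tauto
      _ ≤ #DB + #DA + #DR :=
        (card_union_le _ _).trans (Nat.add_le_add_right (card_union_le _ _) _)
  have hF : #A + #B + #(A ∪ B)ᶜ = Fintype.card F := by
    rw [← card_union_of_disjoint (disjoint_image_zero_image_two hD), card_add_card_compl]
  calc 27 * #D ≤ 27 * (#P * #B + #A * #S + #(A ∪ B)ᶜ * (#A * #B)) := by linarith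
    _ ≤ 4 * Fintype.card F ^ 3 := hF ▸ twentyseven_mul_add_mul_le_of_add_le_mul _ _ _ _ _ hPS

end NonOverlappingCode

lemma nonOverlappingCode_piFinset {F : Type*} [Fintype F] [DecidableEq F] (S : Finset F) :
    NonOverlappingCode (Fintype.piFinset ![S, Sᶜ, Sᶜ] : Set (Fin 3 → F)) := by
  intro u hu v hv huv
  rw [mem_coe, Fintype.mem_piFinset] at hu hv
  have hS : ∀ {x y : F}, x ∈ S → y ∈ Sᶜ → x ≠ y := fun hx hy hxy => mem_compl.1 hy (hxy ▸ hx)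
  rcases (overlapping_fin_three_iff u v).1 huv with h | h | ⟨h, -⟩ | ⟨h, -⟩
  exacts [hS (hu 0) (hv 2) h, hS (hv 0) (hu 2) h, hS (hu 0) (hv 1) h, hS (hv 0) (hu 1) h]

lemma le_maxNOCode_three {q k : ℕ} (hk : k ≤ q) : k * (q - k) ^ 2 ≤ maxNOCode 3 q := by
  obtain ⟨S, -, hS⟩ := exists_subset_card_eq (s := (univ : Finset (Fin q))) (by simpa using hk)
  have := (nonOverlappingCode_piFinset S).ncard_le_maxNOCode
  rw [Set.ncard_coe_finset, Fintype.card_piFinset, Fin.prod_univ_three] at this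
  simpa [card_compl, hS, sq, mul_assoc] using this

lemma maxNOCode_three_le (q : ℕ) : 27 * maxNOCode 3 q ≤ 4 * q ^ 3 := by
  obtain ⟨C, hC, hcard⟩ := exists_nonOverlappingCode_ncard_eq_maxNOCode 3 q
  obtain ⟨D, rfl⟩ := C.toFinite.exists_finset_coe
  rw [← hcard, Set.ncard_coe_finset]
  simpa using hC.twentyseven_mul_card_le

lemma tendsto_div_three_mul_sub_div_three_sq :
    Tendsto (fun q : ℕ => ((q / 3 : ℕ) : ℝ) * ((q : ℝ) - (q / 3 : ℕ)) ^ 2 / ((q : ℝ) ^ 3 / 3))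
      atTop (𝓝 (4 / 9)) := by
  have hthird : Tendsto (fun q : ℕ => ((q / 3 : ℕ) : ℝ) / q) atTop (𝓝 (1 / 3)) := by
    refine ((tendsto_nat_floor_mul_div_atTop (R := ℝ) (a := 1 / 3) (by norm_num)).comp
      tendsto_natCast_atTop_atTop).congr fun q => ?_
    simp [← Nat.floor_div_eq_div (K := ℝ), div_eq_inv_mul]
  have := ((by fun_prop : Continuous fun x : ℝ => 3 * x * (1 - x) ^ 2).tendsto _).comp hthird
  norm_num [Function.comp_def] at this
  refine this.congr' ?_
  filter_upwards [eventually_ne_atTop 0] with q hq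
  field_simp

/-- Theorem 5 of Blackburn, "Non-overlapping codes": `lim_{q→∞} C(3,q)/(q³/3) = 4/9`. -/
theorem stmt17 :
    Filter.Tendsto (fun q : ℕ => (maxNOCode 3 q : ℝ) / ((q : ℝ) ^ 3 / 3))
      Filter.atTop (nhds (4 / 9)) := by
  refine tendsto_of_tendsto_of_tendsto_of_le_of_le' tendsto_div_three_mul_sub_div_three_sq
    tendsto_const_nhds (.of_forall fun q => ?_) ?_
  · have := (Nat.cast_le (α := ℝ)).2 (le_maxNOCode_three (Nat.div_le_self q 3))
    push_cast [Nat.cast_sub (Nat.div_le_self q 3)] at this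
    gcongr
  · filter_upwards [eventually_ne_atTop 0] with q hq
    have := (Nat.cast_le (α := ℝ)).2 (maxNOCode_three_le q)
    push_cast at this
    rw [div_le_iff₀ (by positivity)]
    linarith
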